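/- arXiv:1403.2091 — 2 statements merged into one kernel-verified Lean document; each statement's English description precedes it below -/
import Mathlib

section
/- Define an action of D₈ = ⟨a,b ∣ a² = 1, b⁴ = 1, b^a = b⁻¹⟩ on the ℤ₂-module ℤ₂[i] of 2-adic Gaussian integers by 1.a := 1, i.a := −i (complex conjugation) and 1.b := i, i.b := −1 (multiplication by i). Then this action is uniserial: with N₀ := ℤ₂[i] and N_{j+1} := [D₈, N_j], each index [N_j : N_{j+1}] equals 2. -/
/-- `ℤ₂[i]`, the Gaussian integers over the 2-adic integers, as the free `ℤ₂`-module
`ℤ₂ ⊕ ℤ₂·i`: the pair `(x, y)` represents `x + y·i`. -/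
abbrev ZTwoI : Type := PadicInt 2 × PadicInt 2

/-- The lower `G`-central series: `N₀ = N`, `N_{j+1} = [G, N_j] = ⟨n.g − n : n ∈ N_j, g ∈ G⟩`. -/
def lowerRCentral (G : Type*) [Group G] (N : Type*) [AddCommGroup N] [DistribMulAction G N] :
    ℕ → AddSubgroup N
  | 0 => ⊤
  | (j + 1) => AddSubgroup.closure {x | ∃ n ∈ lowerRCentral G N j, ∃ g : G, x = g • n - n}

/-!
The series is the `(i - 1)`-adic filtration `N_j = (i - 1)^j ℤ₂[i]`. Indeed `b • x - x = (i - 1) x`,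
each `g ∈ D₈` satisfies `g • (i - 1) x = (i - 1) (h • x)` for some `h` (conjugation sends `i - 1` to
its associate `i (i - 1)`), and every `g • x - x` lies in `(i - 1) ℤ₂[i]`, the kernel of the
`D₈`-invariant residue map `x + y i ↦ x + y mod 2`. As multiplication by `i - 1` is injective, each
index `[N_j : N_{j+1}]` equals `[ℤ₂[i] : (i - 1) ℤ₂[i]] = 2`.
-/

namespace DihedralGroup

variable {n : ℕ}

@[elab_as_elim]
theorem induction_on_r_one_sr_zero [NeZero n] {P : DihedralGroup n → Prop} (one : P 1)
    (mul : ∀ g h, P g → P h → P (g * h)) (r_one : P (r 1)) (sr_zero : P (sr 0))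
    (g : DihedralGroup n) : P g := by
  have r_mem (k : ZMod n) : P (r k) := by
    rw [← ZMod.natCast_zmod_val k, ← r_one_pow]
    induction k.val with
    | zero => exact one
    | succ m ih => rw [pow_succ]; exact mul _ _ ih r_one
  cases g with
  | r k => exact r_mem k
  | sr k => rw [← zero_add k, ← sr_mul_r]; exact mul _ _ sr_zero (r_mem k)

end DihedralGroup

theorem PadicInt.toZMod_eq_zero_iff_dvd {p : ℕ} [Fact p.Prime] {x : ℤ_[p]} :
    toZMod x = 0 ↔ (p : ℤ_[p]) ∣ x := by
  rw [← RingHom.mem_ker, ker_toZMod, maximalIdeal_eq_span_p, Ideal.mem_span_singleton]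

section LowerRCentral

variable {G N : Type*} [Group G] [AddCommGroup N] [DistribMulAction G N]

theorem lowerRCentral_zero : lowerRCentral G N 0 = ⊤ :=
  rfl

theorem lowerRCentral_succ (j : ℕ) :
    lowerRCentral G N (j + 1) =
      AddSubgroup.closure {x | ∃ n ∈ lowerRCentral G N j, ∃ g : G, x = g • n - n} :=
  rfl

theorem map_lowerRCentral_le_succ {T : N →+ N} {g₀ : G} (hg₀ : ∀ x, T x = g₀ • x - x) (j : ℕ) :
    (lowerRCentral G N j).map T ≤ lowerRCentral G N (j + 1) := by
  rintro _ ⟨x, hx, rfl⟩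
  exact AddSubgroup.subset_closure ⟨x, hx, g₀, hg₀ x⟩

theorem lowerRCentral_succ_eq_map (T : N →+ N) (hT : ∀ (g : G) x, ∃ h : G, g • T x = T (h • x))
    (hrange : ∀ (g : G) x, g • x - x ∈ T.range) (g₀ : G) (hg₀ : ∀ x, T x = g₀ • x - x) :
    ∀ j, lowerRCentral G N (j + 1) = (lowerRCentral G N j).map T
  | 0 => by
    refine le_antisymm ?_ (map_lowerRCentral_le_succ hg₀ 0)
    rw [lowerRCentral_succ, AddSubgroup.closure_le, lowerRCentral_zero,
      ← AddMonoidHom.range_eq_map]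
    rintro _ ⟨x, -, g, rfl⟩
    exact hrange g x
  | j + 1 => by
    refine le_antisymm ?_ (map_lowerRCentral_le_succ hg₀ (j + 1))
    rw [lowerRCentral_succ (j + 1), AddSubgroup.closure_le]
    rintro _ ⟨n, hn, g, rfl⟩
    rw [lowerRCentral_succ_eq_map T hT hrange g₀ hg₀ j] at hn
    obtain ⟨x, hx, rfl⟩ := hn
    obtain ⟨h, hh⟩ := hT g x
    exact ⟨h • x - x, AddSubgroup.subset_closure ⟨x, hx, h, rfl⟩, by rw [hh, map_sub]⟩

end LowerRCentral

theorem AddSubgroup.relIndex_succ_eq_of_map {N : Type*} [AddGroup N] {L : ℕ → AddSubgroup N}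
    {T : N →+ N} (hT : Function.Injective T) (hL : ∀ j, L (j + 1) = (L j).map T) (j : ℕ) :
    (L (j + 1)).relIndex (L j) = (L 1).relIndex (L 0) := by
  induction j with
  | zero => rfl
  | succ j ih => rw [hL (j + 1), hL j, relIndex_map_map_of_injective _ _ hT, ← hL j, ih]

namespace ZTwoI

open DihedralGroup

-- `(i - 1)(x + y i) = (-x - y) + (x - y) i`
noncomputable def mulIMinusOne : ZTwoI →+ ZTwoI :=
  AddMonoidHom.mk' (fun x => (-x.1 - x.2, x.1 - x.2)) fun x y => by ext <;> simp <;> ring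

theorem mulIMinusOne_apply (x : ZTwoI) : mulIMinusOne x = (-x.1 - x.2, x.1 - x.2) :=
  rfl

theorem mulIMinusOne_injective : Function.Injective mulIMinusOne := by
  refine (injective_iff_map_eq_zero _).2 fun x hx => ?_
  have h₁ : -x.1 - x.2 = 0 := congrArg Prod.fst hx
  have h₂ : x.1 - x.2 = 0 := congrArg Prod.snd hx
  have hx₁ : (2 : PadicInt 2) * x.1 = 0 := by linear_combination h₂ - h₁
  have hx₂ : (2 : PadicInt 2) * x.2 = 0 := by linear_combination -h₁ - h₂
  exact Prod.ext ((mul_eq_zero.1 hx₁).resolve_left two_ne_zero)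
    ((mul_eq_zero.1 hx₂).resolve_left two_ne_zero)

-- the reduction `ℤ₂[i] → ℤ₂[i]/(i - 1) ≅ 𝔽₂`
noncomputable def residue : ZTwoI →+ ZMod 2 :=
  (PadicInt.toZMod : PadicInt 2 →+* ZMod 2).toAddMonoidHom.coprod PadicInt.toZMod.toAddMonoidHom

theorem residue_apply (x : ZTwoI) : residue x = PadicInt.toZMod x.1 + PadicInt.toZMod x.2 :=
  rfl

theorem range_mulIMinusOne : mulIMinusOne.range = residue.ker := by
  ext x
  rw [AddMonoidHom.mem_ker, residue_apply, ← map_add, PadicInt.toZMod_eq_zero_iff_dvd]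
  constructor
  · rintro ⟨y, rfl⟩
    exact ⟨-y.2, by simp only [mulIMinusOne_apply]; push_cast; ring⟩
  · rintro ⟨w, hw⟩
    push_cast at hw
    refine ⟨(x.2 - w, -w), Prod.ext ?_ ?_⟩
    · simp only [mulIMinusOne_apply]; linear_combination -hw
    · simp only [mulIMinusOne_apply]; ring

theorem residue_surjective : Function.Surjective residue := by
  intro c
  refine ⟨((c.val : ℤ_[2]), 0), ?_⟩
  simp [residue_apply]

theorem index_range_mulIMinusOne : mulIMinusOne.range.index = 2 := by
  rw [range_mulIMinusOne, AddSubgroup.index_ker, AddMonoidHom.range_eq_top.2 residue_surjective,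
    AddSubgroup.card_top, Nat.card_zmod]

section Action

variable [DistribMulAction (DihedralGroup 4) ZTwoI]

theorem exists_smul_mulIMinusOne
    (ha : ∀ x : ZTwoI, (sr 0 : DihedralGroup 4) • x = (x.1, -x.2))
    (hb : ∀ x : ZTwoI, (r 1 : DihedralGroup 4) • x = (-x.2, x.1)) (g : DihedralGroup 4) :
    ∃ h : DihedralGroup 4, ∀ x, g • mulIMinusOne x = mulIMinusOne (h • x) := by
  induction g using induction_on_r_one_sr_zero with
  | one => exact ⟨1, fun x => by simp only [one_smul]⟩
  | mul g g' hg hg' =>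
    obtain ⟨h, hh⟩ := hg
    obtain ⟨h', hh'⟩ := hg'
    exact ⟨h * h', fun x => by rw [mul_smul, mul_smul, hh', hh]⟩
  | r_one => exact ⟨r 1, fun x => by simp only [hb, mulIMinusOne_apply]; ext <;> ring⟩
  | sr_zero =>
    exact ⟨r 1 * sr 0, fun x => by simp only [mul_smul, ha, hb, mulIMinusOne_apply]; ext <;> ring⟩

theorem residue_smul
    (ha : ∀ x : ZTwoI, (sr 0 : DihedralGroup 4) • x = (x.1, -x.2))
    (hb : ∀ x : ZTwoI, (r 1 : DihedralGroup 4) • x = (-x.2, x.1)) (g : DihedralGroup 4)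
    (x : ZTwoI) : residue (g • x) = residue x := by
  induction g using induction_on_r_one_sr_zero generalizing x with
  | one => rw [one_smul]
  | mul g g' hg hg' => rw [mul_smul, hg, hg']
  | r_one =>
    rw [hb, residue_apply, residue_apply, map_neg, ZMod.neg_eq_self_mod_two, add_comm]
  | sr_zero => rw [ha, residue_apply, residue_apply, map_neg, ZMod.neg_eq_self_mod_two]

theorem smul_sub_mem_range_mulIMinusOne
    (ha : ∀ x : ZTwoI, (sr 0 : DihedralGroup 4) • x = (x.1, -x.2))
    (hb : ∀ x : ZTwoI, (r 1 : DihedralGroup 4) • x = (-x.2, x.1)) (g : DihedralGroup 4)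
    (x : ZTwoI) : g • x - x ∈ mulIMinusOne.range := by
  rw [range_mulIMinusOne, AddMonoidHom.mem_ker, map_sub, residue_smul ha hb, sub_self]

theorem mulIMinusOne_eq_smul_sub
    (hb : ∀ x : ZTwoI, (r 1 : DihedralGroup 4) • x = (-x.2, x.1)) (x : ZTwoI) :
    mulIMinusOne x = (r 1 : DihedralGroup 4) • x - x := by
  rw [hb, mulIMinusOne_apply, Prod.mk_sub_mk]
  congr 1
  ring

end Action

end ZTwoI

theorem d8_action_on_gaussian_uniserial_general
    [inst : DistribMulAction (DihedralGroup 4) ZTwoI]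
    (ha : ∀ x : ZTwoI, (DihedralGroup.sr 0 : DihedralGroup 4) • x = (x.1, -x.2))
    (hb : ∀ x : ZTwoI, (DihedralGroup.r 1 : DihedralGroup 4) • x = (-x.2, x.1)) :
    ∀ j : ℕ,
      (lowerRCentral (DihedralGroup 4) ZTwoI (j + 1)).relIndex
        (lowerRCentral (DihedralGroup 4) ZTwoI j) = 2 := by
  have hL := lowerRCentral_succ_eq_map ZTwoI.mulIMinusOne
    (fun g x => (ZTwoI.exists_smul_mulIMinusOne ha hb g).imp fun _ hh => hh x)
    (ZTwoI.smul_sub_mem_range_mulIMinusOne ha hb) _ (ZTwoI.mulIMinusOne_eq_smul_sub hb)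
  intro j
  rw [AddSubgroup.relIndex_succ_eq_of_map ZTwoI.mulIMinusOne_injective hL, hL,
    lowerRCentral_zero, AddSubgroup.relIndex_top_right, ← AddMonoidHom.range_eq_map,
    ZTwoI.index_range_mulIMinusOne]

/-- Define an action of `D₈ = ⟨a, b⟩` (the dihedral group of order 8, `a = sr 0`, `b = r 1`)
on the `ℤ₂`-module `ℤ₂[i]` by letting `a` act as complex conjugation and `b` as
multiplication by `i`. Then this action is uniserial: with `N₀ := ℤ₂[i]` and
`N_{j+1} := [D₈, N_j]`, each index `[N_j : N_{j+1}]` equals `2`. -/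
theorem d8_action_on_gaussian_uniserial
    [inst : DistribMulAction (DihedralGroup 4) ZTwoI]
    [SMulCommClass (DihedralGroup 4) (PadicInt 2) ZTwoI]
    (ha : ∀ x : ZTwoI, (DihedralGroup.sr 0 : DihedralGroup 4) • x = (x.1, -x.2))
    (hb : ∀ x : ZTwoI, (DihedralGroup.r 1 : DihedralGroup 4) • x = (-x.2, x.1)) :
    ∀ j : ℕ,
      (lowerRCentral (DihedralGroup 4) ZTwoI (j + 1)).relIndex
        (lowerRCentral (DihedralGroup 4) ZTwoI j) = 2 :=
  d8_action_on_gaussian_uniserial_general (inst := inst) ha hb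
end

section
/- For the uniserial action of D₈ on ℤ₂[i] (a acting by conjugation, b by multiplication by i), the lower D₈-central series of N = ℤ₂[i] satisfies N₂ₖ = 2^k·ℤ₂[i] for every k ≥ 0; equivalently, the (2k)-th term of the lower central series is 2^k ℤ₂[i]. -/
section LowerCentral

variable {G N : Type*} [Group G] [AddCommGroup N] [DistribMulAction G N]

theorem lowerRCentral_eq_of_smul_sub {M : ℕ → AddSubgroup N} (h0 : M 0 = ⊤)
    (hsub : ∀ j, ∀ x ∈ M j, ∀ g : G, g • x - x ∈ M (j + 1))
    (hgen : ∀ j, ∀ y ∈ M (j + 1), ∃ x ∈ M j, ∃ g : G, y = g • x - x) :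
    ∀ j, lowerRCentral G N j = M j
  | 0 => h0.symm
  | j + 1 => by
    have ih := lowerRCentral_eq_of_smul_sub h0 hsub hgen j
    refine le_antisymm ((AddSubgroup.closure_le _).2 ?_) fun y hy => AddSubgroup.subset_closure ?_
    · rintro _ ⟨x, hx, g, rfl⟩
      exact hsub j x (ih ▸ hx) g
    · obtain ⟨x, hx, g, rfl⟩ := hgen j y hy
      exact ⟨x, ih ▸ hx, g, rfl⟩

end LowerCentral

section Monoid

variable {G N : Type*} [Monoid G] [AddCommGroup N] [DistribMulAction G N]

theorem smul_sub_mem_of_mem_closure {H K : AddSubgroup N} (hKH : K ≤ H) {S : Set G}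
    (hS : ∀ g ∈ S, ∀ x ∈ H, g • x - x ∈ K) {g : G} (hg : g ∈ Submonoid.closure S) :
    ∀ x ∈ H, g • x - x ∈ K := by
  induction hg using Submonoid.closure_induction with
  | mem g hg => exact hS g hg
  | one => simp
  | mul g h _ _ hg hh =>
    intro x hx
    have hhx : h • x ∈ H := by simpa using H.add_mem (hKH (hh x hx)) hx
    simpa [mul_smul] using K.add_mem (hg _ hhx) (hh x hx)

theorem smul_sub_mem_of_map_add_two {M : ℕ → AddSubgroup N} (σ : N →+ N)
    (hσ : ∀ (g : G) x, g • σ x = σ (g • x)) (hper : ∀ j, M (j + 2) = (M j).map σ)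
    (h0 : ∀ x ∈ M 0, ∀ g : G, g • x - x ∈ M 1) (h1 : ∀ x ∈ M 1, ∀ g : G, g • x - x ∈ M 2) :
    ∀ j, ∀ x ∈ M j, ∀ g : G, g • x - x ∈ M (j + 1) := by
  intro j
  induction j using Nat.twoStepInduction with
  | zero => exact h0
  | one => exact h1
  | more j ih _ =>
    intro x hx g
    rw [hper] at hx
    obtain ⟨y, hy, rfl⟩ := AddSubgroup.mem_map.1 hx
    rw [hper (j + 1), hσ, ← map_sub]
    exact AddSubgroup.mem_map_of_mem σ (ih y hy g)

theorem exists_smul_sub_eq_of_map_add_two {M : ℕ → AddSubgroup N} (σ : N →+ N)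
    (hσ : ∀ (g : G) x, g • σ x = σ (g • x)) (hper : ∀ j, M (j + 2) = (M j).map σ)
    (h0 : ∀ y ∈ M 1, ∃ x ∈ M 0, ∃ g : G, y = g • x - x)
    (h1 : ∀ y ∈ M 2, ∃ x ∈ M 1, ∃ g : G, y = g • x - x) :
    ∀ j, ∀ y ∈ M (j + 1), ∃ x ∈ M j, ∃ g : G, y = g • x - x := by
  intro j
  induction j using Nat.twoStepInduction with
  | zero => exact h0
  | one => exact h1
  | more j ih _ =>
    intro y hy
    rw [hper (j + 1)] at hy
    obtain ⟨z, hz, rfl⟩ := AddSubgroup.mem_map.1 hy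
    obtain ⟨x, hx, g, rfl⟩ := ih z hz
    exact ⟨σ x, hper j ▸ AddSubgroup.mem_map_of_mem σ hx, g, by rw [map_sub, hσ]⟩

end Monoid

theorem DihedralGroup.mem_closure_sr_zero_r_one {n : ℕ} [NeZero n] (g : DihedralGroup n) :
    g ∈ Submonoid.closure {sr 0, r 1} := by
  have hr : ∀ i : ZMod n, r i ∈ Submonoid.closure {sr 0, r 1} := fun i => by
    rw [← ZMod.natCast_zmod_val i, ← r_one_pow]
    exact pow_mem (Submonoid.subset_closure (by simp)) _
  rcases g with i | i
  · exact hr i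
  · rw [← zero_add i, ← sr_mul_r]
    exact mul_mem (Submonoid.subset_closure (by simp)) (hr i)

namespace ZTwoI

noncomputable def mulOneSubI : ZTwoI →+ ZTwoI :=
  AddMonoidHom.mk' (fun x => (x.1 + x.2, x.2 - x.1)) fun x y => by
    ext <;> simp only [Prod.fst_add, Prod.snd_add] <;> ring

@[simp]
theorem mulOneSubI_apply (x : ZTwoI) : mulOneSubI x = (x.1 + x.2, x.2 - x.1) := rfl

/-- `(1 - i)^j ℤ₂[i]`, using `(1 - i)^2 ℤ₂[i] = 2 ℤ₂[i]`. -/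
noncomputable def oneSubIPow : ℕ → AddSubgroup ZTwoI
  | 0 => ⊤
  | 1 => mulOneSubI.range
  | j + 2 => (oneSubIPow j).map (nsmulAddMonoidHom 2)

theorem mem_oneSubIPow_one {x : ZTwoI} : x ∈ oneSubIPow 1 ↔ ∃ y, x = mulOneSubI y := by
  simp only [oneSubIPow, AddMonoidHom.mem_range, eq_comm]

theorem mem_oneSubIPow_two_mul {k : ℕ} {x : ZTwoI} :
    x ∈ oneSubIPow (2 * k) ↔ ∃ y : ZTwoI, x = (2 ^ k : ℕ) • y := by
  induction k generalizing x with
  | zero => simp [oneSubIPow]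
  | succ k ih =>
    simp only [Nat.mul_succ, oneSubIPow, AddSubgroup.mem_map, ih, nsmulAddMonoidHom_apply]
    constructor
    · rintro ⟨_, ⟨y, rfl⟩, rfl⟩
      exact ⟨y, by rw [smul_smul, ← pow_succ']⟩
    · rintro ⟨y, rfl⟩
      exact ⟨_, ⟨y, rfl⟩, by rw [smul_smul, ← pow_succ']⟩

theorem mem_oneSubIPow_two {x : ZTwoI} : x ∈ oneSubIPow 2 ↔ ∃ y : ZTwoI, x = 2 • y := by
  simpa using mem_oneSubIPow_two_mul (k := 1) (x := x)

theorem oneSubIPow_two_le_one : oneSubIPow 2 ≤ oneSubIPow 1 := by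
  intro x hx
  obtain ⟨y, rfl⟩ := mem_oneSubIPow_two.1 hx
  exact mem_oneSubIPow_one.2 ⟨(y.1 - y.2, y.1 + y.2), by ext <;> simp <;> ring⟩

theorem mulOneSubI_mulOneSubI (x : ZTwoI) : mulOneSubI (mulOneSubI x) = 2 • (x.2, -x.1) := by
  ext <;> simp <;> ring

theorem conj_sub_mem_oneSubIPow_one (x : ZTwoI) : ((x.1, -x.2) : ZTwoI) - x ∈ oneSubIPow 1 :=
  mem_oneSubIPow_one.2 ⟨(x.2, -x.2), by ext <;> simp⟩

theorem conj_sub_mem_oneSubIPow_two {x : ZTwoI} (hx : x ∈ oneSubIPow 1) :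
    ((x.1, -x.2) : ZTwoI) - x ∈ oneSubIPow 2 := by
  obtain ⟨y, rfl⟩ := mem_oneSubIPow_one.1 hx
  exact mem_oneSubIPow_two.2 ⟨(0, y.1 - y.2), by ext <;> simp; ring⟩

variable [DistribMulAction (DihedralGroup 4) ZTwoI]

theorem r_one_smul_sub (hb : ∀ x : ZTwoI, (DihedralGroup.r 1 : DihedralGroup 4) • x = (-x.2, x.1))
    (x : ZTwoI) : (DihedralGroup.r 1 : DihedralGroup 4) • x - x = -mulOneSubI x := by
  rw [hb]
  ext <;> simp; ring

theorem smul_sub_mem_oneSubIPow_one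
    (ha : ∀ x : ZTwoI, (DihedralGroup.sr 0 : DihedralGroup 4) • x = (x.1, -x.2))
    (hb : ∀ x : ZTwoI, (DihedralGroup.r 1 : DihedralGroup 4) • x = (-x.2, x.1)) :
    ∀ x ∈ oneSubIPow 0, ∀ g : DihedralGroup 4, g • x - x ∈ oneSubIPow 1 := by
  intro x hx g
  refine smul_sub_mem_of_mem_closure le_top ?_ g.mem_closure_sr_zero_r_one x hx
  rintro _ (rfl | rfl) y -
  · rw [ha]
    exact conj_sub_mem_oneSubIPow_one y
  · rw [r_one_smul_sub hb]
    exact neg_mem (mem_oneSubIPow_one.2 ⟨y, rfl⟩)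

theorem smul_sub_mem_oneSubIPow_two
    (ha : ∀ x : ZTwoI, (DihedralGroup.sr 0 : DihedralGroup 4) • x = (x.1, -x.2))
    (hb : ∀ x : ZTwoI, (DihedralGroup.r 1 : DihedralGroup 4) • x = (-x.2, x.1)) :
    ∀ x ∈ oneSubIPow 1, ∀ g : DihedralGroup 4, g • x - x ∈ oneSubIPow 2 := by
  intro x hx g
  refine smul_sub_mem_of_mem_closure oneSubIPow_two_le_one ?_ g.mem_closure_sr_zero_r_one x hx
  rintro _ (rfl | rfl) y hy
  · rw [ha]
    exact conj_sub_mem_oneSubIPow_two hy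
  · obtain ⟨z, rfl⟩ := mem_oneSubIPow_one.1 hy
    rw [r_one_smul_sub hb, mulOneSubI_mulOneSubI, ← smul_neg]
    exact mem_oneSubIPow_two.2 ⟨_, rfl⟩

theorem exists_smul_sub_eq_of_mem_oneSubIPow_one
    (hb : ∀ x : ZTwoI, (DihedralGroup.r 1 : DihedralGroup 4) • x = (-x.2, x.1)) :
    ∀ y ∈ oneSubIPow 1, ∃ x ∈ oneSubIPow 0, ∃ g : DihedralGroup 4, y = g • x - x := by
  intro y hy
  obtain ⟨z, rfl⟩ := mem_oneSubIPow_one.1 hy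
  exact ⟨-z, trivial, DihedralGroup.r 1, by rw [r_one_smul_sub hb, map_neg, neg_neg]⟩

theorem exists_smul_sub_eq_of_mem_oneSubIPow_two
    (hb : ∀ x : ZTwoI, (DihedralGroup.r 1 : DihedralGroup 4) • x = (-x.2, x.1)) :
    ∀ y ∈ oneSubIPow 2, ∃ x ∈ oneSubIPow 1, ∃ g : DihedralGroup 4, y = g • x - x := by
  intro y hy
  obtain ⟨z, rfl⟩ := mem_oneSubIPow_two.1 hy
  refine ⟨mulOneSubI (z.2, -z.1), mem_oneSubIPow_one.2 ⟨_, rfl⟩, DihedralGroup.r 1, ?_⟩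
  rw [r_one_smul_sub hb, mulOneSubI_mulOneSubI, ← smul_neg]
  ext <;> simp

theorem lowerRCentral_eq_oneSubIPow
    (ha : ∀ x : ZTwoI, (DihedralGroup.sr 0 : DihedralGroup 4) • x = (x.1, -x.2))
    (hb : ∀ x : ZTwoI, (DihedralGroup.r 1 : DihedralGroup 4) • x = (-x.2, x.1)) :
    ∀ j, lowerRCentral (DihedralGroup 4) ZTwoI j = oneSubIPow j := by
  have hσ (g : DihedralGroup 4) (x : ZTwoI) :
      g • nsmulAddMonoidHom 2 x = nsmulAddMonoidHom 2 (g • x) :=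
    smul_comm g 2 x
  have hper (j : ℕ) : oneSubIPow (j + 2) = (oneSubIPow j).map (nsmulAddMonoidHom 2) := rfl
  exact lowerRCentral_eq_of_smul_sub rfl
    (smul_sub_mem_of_map_add_two _ hσ hper
      (smul_sub_mem_oneSubIPow_one ha hb) (smul_sub_mem_oneSubIPow_two ha hb))
    (exists_smul_sub_eq_of_map_add_two _ hσ hper
      (exists_smul_sub_eq_of_mem_oneSubIPow_one hb) (exists_smul_sub_eq_of_mem_oneSubIPow_two hb))

end ZTwoI

theorem d8_lowerCentral_even_term_eq_pow_two_smul_general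
    [inst : DistribMulAction (DihedralGroup 4) ZTwoI]
    (ha : ∀ x : ZTwoI, (DihedralGroup.sr 0 : DihedralGroup 4) • x = (x.1, -x.2))
    (hb : ∀ x : ZTwoI, (DihedralGroup.r 1 : DihedralGroup 4) • x = (-x.2, x.1)) :
    ∀ k : ℕ, ∀ x : ZTwoI,
      x ∈ lowerRCentral (DihedralGroup 4) ZTwoI (2 * k) ↔ ∃ y : ZTwoI, x = (2 ^ k : ℕ) • y := by
  intro k x
  rw [ZTwoI.lowerRCentral_eq_oneSubIPow ha hb, ZTwoI.mem_oneSubIPow_two_mul]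

/-- For the uniserial action of `D₈` on `ℤ₂[i]` (`a = sr 0` acting by complex conjugation,
`b = r 1` by multiplication by `i`), the lower `D₈`-central series of `N = ℤ₂[i]`
satisfies `N_{2k} = 2^k·ℤ₂[i]` for every `k ≥ 0`. -/
theorem d8_lowerCentral_even_term_eq_pow_two_smul
    [inst : DistribMulAction (DihedralGroup 4) ZTwoI]
    [SMulCommClass (DihedralGroup 4) (PadicInt 2) ZTwoI]
    (ha : ∀ x : ZTwoI, (DihedralGroup.sr 0 : DihedralGroup 4) • x = (x.1, -x.2))
    (hb : ∀ x : ZTwoI, (DihedralGroup.r 1 : DihedralGroup 4) • x = (-x.2, x.1)) :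
    ∀ k : ℕ, ∀ x : ZTwoI,
      x ∈ lowerRCentral (DihedralGroup 4) ZTwoI (2 * k) ↔ ∃ y : ZTwoI, x = (2 ^ k : ℕ) • y :=
  d8_lowerCentral_even_term_eq_pow_two_smul_general (inst := inst) ha hb
end
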